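/- arXiv:2212.11430 — 5 statements merged into one kernel-verified Lean document; each statement's English description precedes it below -/
import Mathlib

section
/- Let f, η : ℝ → ℝ be convex and differentiable, let q(u) = ∫₀ᵘ η'(ξ) f'(ξ) dξ, and define for u, v ∈ ℝ with s = (f(u)-f(v))/(u-v) when u ≠ v: P(v,u) = (v-u)·(s·(η(u)-η(v)) - (q(u)-q(v))). Then P(v,u) ≥ 0 for all u ≠ v. -/
open intervalIntegral Set

theorem Monotone.intervalIntegrable_mul {g h : ℝ → ℝ} (hg : Monotone g) (hh : Monotone h)
    (a b : ℝ) : IntervalIntegrable (fun x => g x * h x) MeasureTheory.volume a b := by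
  rw [intervalIntegrable_iff]
  refine hh.intervalIntegrable.def'.bdd_mul hg.measurable.aestronglyMeasurable
    (c := max |g (a ⊓ b)| |g (a ⊔ b)|) ?_
  filter_upwards [MeasureTheory.ae_restrict_mem measurableSet_uIoc] with x hx
  obtain ⟨hx₁, hx₂⟩ := uIoc_subset_uIcc hx
  exact abs_le_max_abs_abs (hg hx₁) (hg hx₂)

theorem Monotone.integral_sub_mul_sub_nonneg {g h : ℝ → ℝ} (hg : Monotone g) (hh : Monotone h)
    {a b : ℝ} (hab : a ≤ b) (c : ℝ) : 0 ≤ ∫ x in a..b, (g x - g c) * (h x - h c) :=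
  integral_nonneg hab fun x _ => (hg.monovary hh).sub_mul_sub_nonneg c x

/-- The mean value theorem provides `c` with `f' c = s`; subtracting the constants `η' c` and
`f' c` from the two factors then changes the integral exactly by `-s (η b - η a)`. -/
theorem slope_mul_sub_le_integral_deriv_mul_deriv {f η : ℝ → ℝ} (hfd : Differentiable ℝ f)
    (hηd : Differentiable ℝ η) (hf' : Monotone (deriv f)) (hη' : Monotone (deriv η))
    {a b : ℝ} (hab : a < b) :
    (f b - f a) / (b - a) * (η b - η a) ≤ ∫ x in a..b, deriv η x * deriv f x := by
  obtain ⟨c, -, hc⟩ := exists_deriv_eq_slope f hab hfd.continuous.continuousOn hfd.differentiableOn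
  have hslope : deriv f c * (b - a) = f b - f a := by rw [hc]; exact div_mul_cancel₀ _ (by linarith)
  have hf_int : ∫ x in a..b, deriv f x = f b - f a :=
    integral_deriv_eq_sub (fun x _ => hfd x) hf'.intervalIntegrable
  have hη_int : ∫ x in a..b, deriv η x = η b - η a :=
    integral_deriv_eq_sub (fun x _ => hηd x) hη'.intervalIntegrable
  have hexpand : ∫ x in a..b, (deriv η x - deriv η c) * (deriv f x - deriv f c) =
      (∫ x in a..b, deriv η x * deriv f x) - deriv f c * (η b - η a)
        - deriv η c * ((f b - f a) - deriv f c * (b - a)) := by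
    have hfun : (fun x => (deriv η x - deriv η c) * (deriv f x - deriv f c)) = fun x =>
        deriv η x * deriv f x - deriv f c * deriv η x
          - deriv η c * (deriv f x - deriv f c) := by
      ext x; ring
    rw [hfun, integral_sub, integral_sub, integral_const_mul, integral_const_mul,
      integral_sub hf'.intervalIntegrable intervalIntegrable_const, hf_int, hη_int, integral_const, smul_eq_mul, mul_comm (b - a)]
    · exact hη'.intervalIntegrable_mul hf' a b
    · exact hη'.intervalIntegrable.const_mul _
    · exact (hη'.intervalIntegrable_mul hf' a b).sub (hη'.intervalIntegrable.const_mul _)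
    · exact (hf'.intervalIntegrable.sub intervalIntegrable_const).const_mul _
  have := hη'.integral_sub_mul_sub_nonneg hf' hab.le c
  rw [hexpand, hslope, sub_self, mul_zero, sub_zero] at this
  rw [← hc]
  linarith

theorem entropy_production_nonneg_general
    (f η : ℝ → ℝ)
    (hf : ConvexOn ℝ Set.univ f) (hη : ConvexOn ℝ Set.univ η)
    (hfd : Differentiable ℝ f) (hηd : Differentiable ℝ η)
    (q : ℝ → ℝ) (hq : ∀ u : ℝ, q u = ∫ ξ in (0:ℝ)..u, deriv η ξ * deriv f ξ)
    (u v : ℝ) :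
    0 ≤ (v - u) * (((f u - f v) / (u - v)) * (η u - η v) - (q u - q v)) := by
  have hf' : Monotone (deriv f) := monotoneOn_univ.1 (hf.monotoneOn_deriv fun x _ => hfd x)
  have hη' : Monotone (deriv η) := monotoneOn_univ.1 (hη.monotoneOn_deriv fun x _ => hηd x)
  have hq_sub (a b : ℝ) : q b - q a = ∫ x in a..b, deriv η x * deriv f x := by
    rw [hq, hq, integral_interval_sub_left (hη'.intervalIntegrable_mul hf' 0 b)
      (hη'.intervalIntegrable_mul hf' 0 a)]
  have key {a b : ℝ} (hab : a < b) : (f b - f a) / (b - a) * (η b - η a) ≤ q b - q a :=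
    hq_sub a b ▸ slope_mul_sub_le_integral_deriv_mul_deriv hfd hηd hf' hη' hab
  rcases lt_trichotomy u v with h | rfl | h
  · rw [← neg_div_neg_eq, neg_sub, neg_sub]
    exact mul_nonneg (sub_nonneg.2 h.le) (by linarith [key h])
  · simp
  · exact mul_nonneg_of_nonpos_of_nonpos (by linarith) (by linarith [key h])

/-- For convex differentiable `f` and `η`, with entropy flux `q(u) = ∫₀ᵘ η' f'`,
the quantity `P(v,u) = (v-u)(s(η(u)-η(v)) - (q(u)-q(v)))`, with `s` the
Rankine–Hugoniot slope, is nonnegative. -/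
theorem entropy_production_nonneg
    (f η : ℝ → ℝ)
    (hf : ConvexOn ℝ Set.univ f) (hη : ConvexOn ℝ Set.univ η)
    (hfd : Differentiable ℝ f) (hηd : Differentiable ℝ η)
    (q : ℝ → ℝ) (hq : ∀ u : ℝ, q u = ∫ ξ in (0:ℝ)..u, deriv η ξ * deriv f ξ)
    (u v : ℝ) (huv : u ≠ v) :
    0 ≤ (v - u) * (((f u - f v) / (u - v)) * (η u - η v) - (q u - q v)) :=
  entropy_production_nonneg_general f η hf hη hfd hηd q hq u v
end

section
/- Let f, η : ℝ → ℝ be convex and differentiable with η' strictly increasing, let q(u) = ∫₀ᵘ η'(ξ)f'(ξ) dξ, and for u ≠ v set s = (f(u)-f(v))/(u-v) and P(v,u) = (v-u)(s(η(u)-η(v)) - (q(u)-q(v))). If v is not in the set I(u) ∪ I⁻(u) (the linear-degeneracy sets where the supporting tangents at u touch the graph of f), then P(v,u) > 0; if v lies in I(u) with f affine between u and v, then P(v,u) = 0. -/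
open MeasureTheory Set

/-- Product of two monotone functions is interval integrable. -/
lemma monotone_mul_intervalIntegrable {g₁ g₂ : ℝ → ℝ} (h₁ : Monotone g₁) (h₂ : Monotone g₂)
    (p r : ℝ) : IntervalIntegrable (fun x => g₁ x * g₂ x) volume p r := by
  have hc : IntervalIntegrable
      (fun _ : ℝ => ((|g₁ p| + |g₁ r|) * (|g₂ p| + |g₂ r|))) volume p r :=
    intervalIntegrable_const
  rw [intervalIntegrable_iff] at hc ⊢
  refine hc.mono' ((h₁.measurable.mul h₂.measurable).aestronglyMeasurable) ?_
  refine (ae_restrict_iff' measurableSet_uIoc).2 (Filter.Eventually.of_forall ?_)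
  intro x hx
  rw [Set.uIoc] at hx
  have hb : ∀ (g : ℝ → ℝ), Monotone g → |g x| ≤ |g p| + |g r| := by
    intro g hg
    have l1 : min (g p) (g r) ≤ g x := by
      rw [← hg.map_min]; exact hg hx.1.le
    have l2 : g x ≤ max (g p) (g r) := by
      rw [← hg.map_max]; exact hg hx.2
    have m1 : -(|g p| + |g r|) ≤ min (g p) (g r) :=
      le_min (by linarith [neg_abs_le (g p), abs_nonneg (g r)])
        (by linarith [neg_abs_le (g r), abs_nonneg (g p)])
    have m2 : max (g p) (g r) ≤ |g p| + |g r| :=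
      max_le (by linarith [le_abs_self (g p), abs_nonneg (g r)])
        (by linarith [le_abs_self (g r), abs_nonneg (g p)])
    exact abs_le.2 ⟨by linarith, by linarith⟩
  have := mul_le_mul (hb g₁ h₁) (hb g₂ h₂) (abs_nonneg _)
    (by positivity)
  simpa [abs_mul] using this

/-- If `f` agrees with an affine function of slope `s` on `[a, b)` and is differentiable
at `a`, then `deriv f a = s`. -/
lemma deriv_eq_slope_right {f : ℝ → ℝ} {a b s : ℝ} (hfd : DifferentiableAt ℝ f a) (hab : a < b)
    (heq : ∀ x ∈ Set.Ico a b, f x = f a + s * (x - a)) : deriv f a = s := by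
  have hL : HasDerivAt (fun x => f a + s * (x - a)) s a := by
    simpa using (((hasDerivAt_id a).sub_const a).const_mul s).const_add (f a)
  have hmem : Set.Ico a b ∈ nhdsWithin a (Set.Ici a) :=
    Ico_mem_nhdsGE_of_mem ⟨le_refl a, hab⟩
  have hev : f =ᶠ[nhdsWithin a (Set.Ici a)] fun x => f a + s * (x - a) :=
    Filter.eventuallyEq_of_mem hmem heq
  have h1 : derivWithin f (Set.Ici a) a = s := by
    rw [hev.derivWithin_eq (by simp)]
    exact hL.hasDerivWithinAt.derivWithin (uniqueDiffOn_Ici a a Set.self_mem_Ici)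
  rw [← h1]
  exact (hfd.hasDerivAt.hasDerivWithinAt.derivWithin (uniqueDiffOn_Ici a a Set.self_mem_Ici)).symm

/-- If `f` agrees with an affine function of slope `s` on `(b, a]` and is differentiable
at `a`, then `deriv f a = s`. -/
lemma deriv_eq_slope_left {f : ℝ → ℝ} {a b s : ℝ} (hfd : DifferentiableAt ℝ f a) (hab : b < a)
    (heq : ∀ x ∈ Set.Ioc b a, f x = f a + s * (x - a)) : deriv f a = s := by
  have hL : HasDerivAt (fun x => f a + s * (x - a)) s a := by
    simpa using (((hasDerivAt_id a).sub_const a).const_mul s).const_add (f a)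
  have hmem : Set.Ioc b a ∈ nhdsWithin a (Set.Iic a) :=
    Ioc_mem_nhdsLE_of_mem ⟨hab, le_refl a⟩
  have hev : f =ᶠ[nhdsWithin a (Set.Iic a)] fun x => f a + s * (x - a) :=
    Filter.eventuallyEq_of_mem hmem heq
  have h1 : derivWithin f (Set.Iic a) a = s := by
    rw [hev.derivWithin_eq (by simp)]
    exact hL.hasDerivWithinAt.derivWithin (uniqueDiffOn_Iic a a Set.self_mem_Iic)
  rw [← h1]
  exact (hfd.hasDerivAt.hasDerivWithinAt.derivWithin (uniqueDiffOn_Iic a a Set.self_mem_Iic)).symm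

/-- Core positivity lemma: if the derivative of `f` at `a` or at `b` differs from the secant
slope, then the entropy production integral is strictly positive. -/
lemma core_pos (f η : ℝ → ℝ) (hfd : Differentiable ℝ f) (hηd : Differentiable ℝ η)
    (hF : Monotone (deriv f)) (hG : StrictMono (deriv η)) (a b : ℝ) (hab : a < b)
    (hne : deriv f a ≠ (f b - f a) / (b - a) ∨ deriv f b ≠ (f b - f a) / (b - a)) :
    0 < ∫ ξ in a..b, deriv η ξ * (deriv f ξ - (f b - f a) / (b - a)) := by
  set s : ℝ := (f b - f a) / (b - a) with hsdef
  obtain ⟨c, hc, hcs⟩ := exists_deriv_eq_slope f hab (hfd.continuous.continuousOn)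
    (hfd.differentiableOn)
  rw [← hsdef] at hcs
  have hGm : Monotone (deriv η) := hG.monotone
  have hsab : s * (b - a) = f b - f a := div_mul_cancel₀ _ (by linarith : b - a ≠ 0)
  have hintF : ∀ p r : ℝ, IntervalIntegrable (deriv f) volume p r :=
    fun p r => hF.intervalIntegrable
  have hintG : ∀ p r : ℝ, IntervalIntegrable (deriv η) volume p r :=
    fun p r => hGm.intervalIntegrable
  have hintGF : ∀ p r : ℝ, IntervalIntegrable (fun ξ => deriv η ξ * deriv f ξ) volume p r :=
    fun p r => monotone_mul_intervalIntegrable hGm hF p r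
  have hinth : ∀ p r : ℝ,
      IntervalIntegrable (fun ξ => (deriv η ξ - deriv η c) * (deriv f ξ - s)) volume p r := by
    intro p r
    have heq : (fun ξ => (deriv η ξ - deriv η c) * (deriv f ξ - s))
        = fun ξ => (deriv η ξ * deriv f ξ - s * deriv η ξ)
            - (deriv η c * deriv f ξ - deriv η c * s) := by
      funext ξ; ring
    rw [heq]
    exact ((hintGF p r).sub ((hintG p r).const_mul s)).sub
      (((hintF p r).const_mul (deriv η c)).sub intervalIntegrable_const)
  have hFTCf : ∀ p r : ℝ, ∫ ξ in p..r, deriv f ξ = f r - f p := fun p r =>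
    intervalIntegral.integral_eq_sub_of_hasDerivAt (fun x _ => (hfd x).hasDerivAt) (hintF p r)
  -- reduce to the nonnegative integrand
  have key : ∫ ξ in a..b, deriv η ξ * (deriv f ξ - s)
      = ∫ ξ in a..b, (deriv η ξ - deriv η c) * (deriv f ξ - s) := by
    have h1 : IntervalIntegrable (fun ξ => deriv η ξ * (deriv f ξ - s)) volume a b := by
      have heq : (fun ξ => deriv η ξ * (deriv f ξ - s))
          = fun ξ => deriv η ξ * deriv f ξ - s * deriv η ξ := by funext ξ; ring
      rw [heq]; exact (hintGF a b).sub ((hintG a b).const_mul s)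
    have h2 : IntervalIntegrable (fun ξ => deriv η c * deriv f ξ - deriv η c * s) volume a b :=
      ((hintF a b).const_mul (deriv η c)).sub intervalIntegrable_const
    have heq : (fun ξ => (deriv η ξ - deriv η c) * (deriv f ξ - s))
        = fun ξ => deriv η ξ * (deriv f ξ - s) - (deriv η c * deriv f ξ - deriv η c * s) := by
      funext ξ; ring
    rw [heq, intervalIntegral.integral_sub h1 h2]
    have hz : ∫ ξ in a..b, (deriv η c * deriv f ξ - deriv η c * s) = 0 := by
      rw [intervalIntegral.integral_sub ((hintF a b).const_mul (deriv η c)) intervalIntegrable_const,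
        intervalIntegral.integral_const_mul, hFTCf a b, intervalIntegral.integral_const, smul_eq_mul, ← hsab]
      ring
    rw [hz]; ring
  rw [key]
  have hFc : deriv f c = s := hcs
  have hnonneg : ∀ ξ : ℝ, 0 ≤ (deriv η ξ - deriv η c) * (deriv f ξ - s) := by
    intro ξ
    rcases le_total ξ c with h | h
    · have g1 : deriv η ξ ≤ deriv η c := hGm h
      have g2 : deriv f ξ ≤ s := hFc ▸ hF h
      nlinarith
    · have g1 : deriv η c ≤ deriv η ξ := hGm h
      have g2 : s ≤ deriv f ξ := hFc ▸ hF h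
      nlinarith
  rcases hne with hne | hne
  · -- deriv f a < s : find witness on the left of c
    have hFa : deriv f a < s := lt_of_le_of_ne (hcs ▸ hF hc.1.le) hne
    have hx : ∃ x₀ ∈ Set.Ioo a c, deriv f x₀ < s := by
      by_contra hcon
      push_neg at hcon
      have hFs : ∀ x ∈ Set.Ioo a c, deriv f x = s :=
        fun x hx => le_antisymm (hcs ▸ hF hx.2.le) (hcon x hx)
      have haff : ∀ x ∈ Set.Ico a c, f x = f a + s * (x - a) := by
        intro x hx
        rcases eq_or_lt_of_le hx.1 with rfl | hax
        · simp
        · have hcongr : ∫ ξ in a..x, deriv f ξ = ∫ ξ in a..x, s := by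
            apply intervalIntegral.integral_congr_ae
            apply Filter.Eventually.of_forall
            intro ξ hξ
            rw [Set.uIoc_of_le hax.le] at hξ
            exact hFs ξ ⟨hξ.1, lt_of_le_of_lt hξ.2 hx.2⟩
          have h2 := hFTCf a x
          rw [hcongr, intervalIntegral.integral_const, smul_eq_mul] at h2
          linear_combination -h2
      exact absurd (deriv_eq_slope_right (hfd a) hc.1 haff) (ne_of_lt hFa)
    obtain ⟨x₀, hx₀, hFx₀⟩ := hx
    have hGx₀ : deriv η x₀ < deriv η c := hG hx₀.2
    have hpos : 0 < (deriv η x₀ - deriv η c) * (deriv f x₀ - s) :=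
      mul_pos_of_neg_of_neg (by linarith) (by linarith)
    have hxb : x₀ < b := hx₀.2.trans hc.2
    rw [← intervalIntegral.integral_add_adjacent_intervals (hinth a x₀) (hinth x₀ b)]
    have hI2 : 0 ≤ ∫ ξ in x₀..b, (deriv η ξ - deriv η c) * (deriv f ξ - s) :=
      intervalIntegral.integral_nonneg hxb.le (fun x _ => hnonneg x)
    have hI1 : (x₀ - a) * ((deriv η x₀ - deriv η c) * (deriv f x₀ - s))
        ≤ ∫ ξ in a..x₀, (deriv η ξ - deriv η c) * (deriv f ξ - s) := by
      have hmono := intervalIntegral.integral_mono_on (μ := volume) (a := a) (b := x₀)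
        (f := fun _ => (deriv η x₀ - deriv η c) * (deriv f x₀ - s))
        (g := fun ξ => (deriv η ξ - deriv η c) * (deriv f ξ - s))
        hx₀.1.le intervalIntegrable_const (hinth a x₀) ?_
      · rwa [intervalIntegral.integral_const, smul_eq_mul] at hmono
      · intro x hx
        show (deriv η x₀ - deriv η c) * (deriv f x₀ - s)
          ≤ (deriv η x - deriv η c) * (deriv f x - s)
        have e1 : deriv η x ≤ deriv η x₀ := hGm hx.2
        have e2 : deriv f x ≤ deriv f x₀ := hF hx.2
        have p1 : 0 ≤ (deriv η x₀ - deriv η x) * (s - deriv f x) :=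
          mul_nonneg (by linarith) (by linarith)
        have p2 : 0 ≤ (deriv η c - deriv η x₀) * (deriv f x₀ - deriv f x) :=
          mul_nonneg (by linarith) (by linarith)
        nlinarith [p1, p2]
    nlinarith [mul_pos (show (0:ℝ) < x₀ - a by linarith [hx₀.1]) hpos]
  · -- s < deriv f b : find witness on the right of c
    have hFb : s < deriv f b := lt_of_le_of_ne (hcs ▸ hF hc.2.le) (Ne.symm hne)
    have hx : ∃ x₀ ∈ Set.Ioo c b, s < deriv f x₀ := by
      by_contra hcon
      push_neg at hcon
      have hFs : ∀ x ∈ Set.Ioo c b, deriv f x = s :=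
        fun x hx => le_antisymm (hcon x hx) (hcs ▸ hF hx.1.le)
      have haff : ∀ x ∈ Set.Ioc c b, f x = f b + s * (x - b) := by
        intro x hx
        rcases eq_or_lt_of_le hx.2 with rfl | hxb
        · simp
        · have hb_ae : ∀ᵐ ξ : ℝ ∂volume, ξ ≠ b := by
            refine ae_iff.mpr ?_
            have : {ξ : ℝ | ¬ ξ ≠ b} = {b} := by ext ξ; simp
            rw [this]
            exact measure_singleton b
          have hcongr : ∫ ξ in x..b, deriv f ξ = ∫ ξ in x..b, s := by
            apply intervalIntegral.integral_congr_ae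
            filter_upwards [hb_ae] with ξ hξb hξ
            rw [Set.uIoc_of_le hxb.le] at hξ
            exact hFs ξ ⟨lt_of_lt_of_le hx.1 hξ.1.le, lt_of_le_of_ne hξ.2 hξb⟩
          have h2 := hFTCf x b
          rw [hcongr, intervalIntegral.integral_const, smul_eq_mul] at h2
          linear_combination h2
      exact absurd (deriv_eq_slope_left (hfd b) hc.2 haff) (ne_of_gt hFb)
    obtain ⟨x₀, hx₀, hFx₀⟩ := hx
    have hGx₀ : deriv η c < deriv η x₀ := hG hx₀.1
    have hpos : 0 < (deriv η x₀ - deriv η c) * (deriv f x₀ - s) :=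
      mul_pos (by linarith) (by linarith)
    have hax : a < x₀ := hc.1.trans hx₀.1
    rw [← intervalIntegral.integral_add_adjacent_intervals (hinth a x₀) (hinth x₀ b)]
    have hI1 : 0 ≤ ∫ ξ in a..x₀, (deriv η ξ - deriv η c) * (deriv f ξ - s) :=
      intervalIntegral.integral_nonneg hax.le (fun x _ => hnonneg x)
    have hI2 : (b - x₀) * ((deriv η x₀ - deriv η c) * (deriv f x₀ - s))
        ≤ ∫ ξ in x₀..b, (deriv η ξ - deriv η c) * (deriv f ξ - s) := by
      have hmono := intervalIntegral.integral_mono_on (μ := volume) (a := x₀) (b := b)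
        (f := fun _ => (deriv η x₀ - deriv η c) * (deriv f x₀ - s))
        (g := fun ξ => (deriv η ξ - deriv η c) * (deriv f ξ - s))
        hx₀.2.le intervalIntegrable_const (hinth x₀ b) ?_
      · rwa [intervalIntegral.integral_const, smul_eq_mul] at hmono
      · intro x hx
        show (deriv η x₀ - deriv η c) * (deriv f x₀ - s)
          ≤ (deriv η x - deriv η c) * (deriv f x - s)
        have e1 : deriv η x₀ ≤ deriv η x := hGm hx.1
        have e2 : deriv f x₀ ≤ deriv f x := hF hx.1
        have p1 : 0 ≤ (deriv η x - deriv η x₀) * (deriv f x - s) :=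
          mul_nonneg (by linarith) (by linarith)
        have p2 : 0 ≤ (deriv η x₀ - deriv η c) * (deriv f x - deriv f x₀) :=
          mul_nonneg (by linarith) (by linarith)
        nlinarith [p1, p2]
    nlinarith [mul_pos (show (0:ℝ) < b - x₀ by linarith [hx₀.2]) hpos]

/-- The algebraic identity expressing the entropy production as an integral. -/
lemma entropy_ident (f η q : ℝ → ℝ) (hfd : Differentiable ℝ f) (hηd : Differentiable ℝ η)
    (hF : Monotone (deriv f)) (hGm : Monotone (deriv η))
    (hq : ∀ u : ℝ, q u = ∫ ξ in (0:ℝ)..u, deriv η ξ * deriv f ξ) (u v : ℝ) :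
    ((f u - f v) / (u - v)) * (η u - η v) - (q u - q v)
      = ∫ ξ in u..v, deriv η ξ * (deriv f ξ - (f u - f v) / (u - v)) := by
  set s : ℝ := (f u - f v) / (u - v) with hsdef
  have hintG : ∀ p r : ℝ, IntervalIntegrable (deriv η) volume p r :=
    fun p r => hGm.intervalIntegrable
  have hintGF : ∀ p r : ℝ, IntervalIntegrable (fun ξ => deriv η ξ * deriv f ξ) volume p r :=
    fun p r => monotone_mul_intervalIntegrable hGm hF p r
  have h1 : q u - q v = -∫ ξ in u..v, deriv η ξ * deriv f ξ := by
    rw [hq u, hq v]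
    have := intervalIntegral.integral_interval_sub_left (hintGF 0 v) (hintGF 0 u)
    linarith
  have h2 : η u - η v = -∫ ξ in u..v, deriv η ξ := by
    have := intervalIntegral.integral_eq_sub_of_hasDerivAt (f := η) (f' := deriv η)
      (fun x _ => (hηd x).hasDerivAt) (hintG u v)
    linarith
  have h3 : ∫ ξ in u..v, deriv η ξ * (deriv f ξ - s)
      = (∫ ξ in u..v, deriv η ξ * deriv f ξ) - s * ∫ ξ in u..v, deriv η ξ := by
    have heq : (fun ξ => deriv η ξ * (deriv f ξ - s))
        = fun ξ => deriv η ξ * deriv f ξ - s * deriv η ξ := by funext ξ; ring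
    rw [heq, intervalIntegral.integral_sub (hintGF u v) ((hintG u v).const_mul s), intervalIntegral.integral_const_mul]
  rw [h1, h2, h3]
  ring

/-- For `f` convex differentiable and `η` convex differentiable with `η'`
strictly increasing, with entropy flux `q(u) = ∫₀ᵘ η' f'` and
`P(v,u) = (v-u)(s(η(u)-η(v)) - (q(u)-q(v)))` where `s` is the secant slope:
if `v` is outside the contact set `I(u)` then `P(v,u) > 0`, while if `v ∈ I(u)`
and `f` is affine between `u` and `v` then `P(v,u) = 0`. -/
theorem entropy_production_pos_outside_contact
    (f η : ℝ → ℝ)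
    (hf : ConvexOn ℝ Set.univ f) (hη : ConvexOn ℝ Set.univ η)
    (hfd : Differentiable ℝ f) (hηd : Differentiable ℝ η)
    (hη' : StrictMono (deriv η))
    (q : ℝ → ℝ) (hq : ∀ u : ℝ, q u = ∫ ξ in (0:ℝ)..u, deriv η ξ * deriv f ξ)
    (u v : ℝ) (huv : u ≠ v) :
    (v ∉ {w : ℝ | f w = f u + deriv f u * (w - u)} →
      0 < (v - u) * (((f u - f v) / (u - v)) * (η u - η v) - (q u - q v))) ∧
    ((v ∈ {w : ℝ | f w = f u + deriv f u * (w - u)} ∧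
        ∀ ξ ∈ Set.uIcc u v, f ξ = f u + deriv f u * (ξ - u)) →
      (v - u) * (((f u - f v) / (u - v)) * (η u - η v) - (q u - q v)) = 0) := by
  have hF : Monotone (deriv f) := fun x y hxy =>
    hf.monotoneOn_deriv (fun z _ => hfd z) (Set.mem_univ x) (Set.mem_univ y) hxy
  have hGm : Monotone (deriv η) := hη'.monotone
  have hid := entropy_ident f η q hfd hηd hF hGm hq u v
  have h0 : u - v ≠ 0 := sub_ne_zero.2 huv
  set s : ℝ := (f u - f v) / (u - v) with hsdef
  have hsmul : s * (u - v) = f u - f v := div_mul_cancel₀ _ h0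
  constructor
  · intro hv
    simp only [Set.mem_setOf_eq] at hv
    have hus : deriv f u ≠ s := by
      intro h
      apply hv
      rw [← h] at hsmul
      linear_combination hsmul
    rw [hid]
    rcases lt_or_gt_of_ne huv with h | h
    · -- u < v, apply core_pos with a = u, b = v
      have hs' : s = (f v - f u) / (v - u) := by
        rw [hsdef, show f u - f v = -(f v - f u) by ring, show u - v = -(v - u) by ring,
          neg_div_neg_eq]
      have hcore := core_pos f η hfd hηd hF hη' u v h (Or.inl (by rw [← hs']; exact hus))
      rw [← hs'] at hcore
      exact mul_pos (by linarith) hcore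
    · -- v < u, apply core_pos with a = v, b = u
      have hs' : s = (f u - f v) / (u - v) := hsdef
      have hcore := core_pos f η hfd hηd hF hη' v u h (Or.inr (by rw [← hs']; exact hus))
      rw [← hs'] at hcore
      rw [intervalIntegral.integral_symm v u]
      nlinarith [mul_pos (show (0:ℝ) < u - v by linarith) hcore]
  · rintro ⟨hvI, haff⟩
    simp only [Set.mem_setOf_eq] at hvI
    have hsu : s = deriv f u := by
      rw [hsdef, hvI]
      field_simp
      ring
    rw [hid]
    have hzero : ∫ ξ in u..v, deriv η ξ * (deriv f ξ - s) = 0 := by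
      have hb_ae : ∀ᵐ ξ : ℝ ∂volume, ξ ≠ u ⊔ v := by
        refine ae_iff.mpr ?_
        have : {ξ : ℝ | ¬ ξ ≠ u ⊔ v} = {u ⊔ v} := by ext ξ; simp
        rw [this]
        exact measure_singleton _
      have hae : ∀ᵐ ξ : ℝ ∂volume, ξ ∈ Set.uIoc u v →
          deriv η ξ * (deriv f ξ - s) = (0 : ℝ) := by
        filter_upwards [hb_ae] with ξ hξb hmem
        rw [Set.uIoc] at hmem
        have hmem' : ξ ∈ Set.Ioo (u ⊓ v) (u ⊔ v) := ⟨hmem.1, lt_of_le_of_ne hmem.2 hξb⟩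
        have hFξ : deriv f ξ = deriv f u := by
          have hopen : Set.Ioo (u ⊓ v) (u ⊔ v) ∈ nhds ξ := isOpen_Ioo.mem_nhds hmem'
          have hev : f =ᶠ[nhds ξ] fun x => f u + deriv f u * (x - u) := by
            filter_upwards [hopen] with x hx
            exact haff x (Set.Ioo_subset_Icc_self hx)
          rw [hev.deriv_eq]
          have hL : HasDerivAt (fun x => f u + deriv f u * (x - u)) (deriv f u) ξ := by
            simpa using (((hasDerivAt_id ξ).sub_const u).const_mul (deriv f u)).const_add (f u)
          exact hL.deriv
        rw [hFξ, ← hsu]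
        ring
      calc ∫ ξ in u..v, deriv η ξ * (deriv f ξ - s)
          = ∫ _ in u..v, (0 : ℝ) := intervalIntegral.integral_congr_ae hae
        _ = 0 := by simp
    rw [hzero, mul_zero]
end

section
/- Let μ be a probability measure on ℝ with compact support, ⟨h⟩ = ∫ h dμ, and f, η : ℝ → ℝ convex and differentiable with q(u) = ∫₀ᵘ η'(ξ)f'(ξ)dξ. Then B(f,η) := ⟨uq(u)⟩ - ⟨u⟩⟨q(u)⟩ - ⟨η(u)f(u)⟩ + ⟨η(u)⟩⟨f(u)⟩ satisfies B(f,η) ≥ ⟨η(u) - η(⟨u⟩)⟩ · ⟨f(u) - f(⟨u⟩)⟩ ≥ 0. -/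
open MeasureTheory

section Aux

/-- A continuous function is integrable w.r.t. a finite measure supported on a compact set. -/
lemma integrable_of_compact_carrier {μ : Measure ℝ} [IsProbabilityMeasure μ]
    {K : Set ℝ} (hK : IsCompact K) (hKc : μ Kᶜ = 0) {h : ℝ → ℝ} (hc : Continuous h) :
    Integrable h μ := by
  obtain ⟨C, hC⟩ : ∃ C, ∀ x ∈ K, ‖h x‖ ≤ C := by
    rcases K.eq_empty_or_nonempty with rfl | hne
    · exact ⟨0, by simp⟩
    · obtain ⟨x₀, hx₀, hmax⟩ :=
        hK.exists_isMaxOn hne ((continuous_norm.comp hc).continuousOn)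
      exact ⟨‖h x₀‖, fun x hx => hmax hx⟩
  refine ⟨hc.aestronglyMeasurable, HasFiniteIntegral.of_bounded (C := C) ?_⟩
  have hmem : ∀ᵐ x ∂μ, x ∈ K := mem_ae_iff.mpr hKc
  filter_upwards [hmem] with x hx using hC x hx

lemma mul_sub_sub_nonneg {g₁ g₂ : ℝ → ℝ} (h₁ : Monotone g₁) (h₂ : Monotone g₂) (x y : ℝ) :
    0 ≤ (g₁ x - g₁ y) * (g₂ x - g₂ y) := by
  rcases le_total y x with h | h
  · exact mul_nonneg (sub_nonneg.mpr (h₁ h)) (sub_nonneg.mpr (h₂ h))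
  · nlinarith [sub_nonpos.mpr (h₁ h), sub_nonpos.mpr (h₂ h)]

/-- Chebyshev's integral inequality for a finite measure and two monotone functions. -/
lemma chebyshev_measure (ν : Measure ℝ) [IsFiniteMeasure ν] {g₁ g₂ : ℝ → ℝ}
    (h₁ : Monotone g₁) (h₂ : Monotone g₂)
    (i₁ : Integrable g₁ ν) (i₂ : Integrable g₂ ν)
    (i₁₂ : Integrable (fun x => g₁ x * g₂ x) ν) :
    (∫ x, g₁ x ∂ν) * (∫ x, g₂ x ∂ν) ≤ (ν Set.univ).toReal * ∫ x, g₁ x * g₂ x ∂ν := by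
  set m := (ν Set.univ).toReal with hm
  set I₁ := ∫ x, g₁ x ∂ν with hI₁
  set I₂ := ∫ x, g₂ x ∂ν with hI₂
  set I₁₂ := ∫ x, g₁ x * g₂ x ∂ν with hI₁₂
  have key : ∀ x, 0 ≤ m * (g₁ x * g₂ x) - g₁ x * I₂ - I₁ * g₂ x + I₁₂ := by
    intro x
    have h0 : 0 ≤ ∫ y, (g₁ x - g₁ y) * (g₂ x - g₂ y) ∂ν :=
      integral_nonneg fun y => mul_sub_sub_nonneg h₁ h₂ x y
    have int1 : Integrable (fun y => g₁ x * g₂ x - g₁ x * g₂ y) ν :=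
      (integrable_const _).sub (i₂.const_mul _)
    have int2 : Integrable (fun y => g₁ x * g₂ x - g₁ x * g₂ y - g₂ x * g₁ y) ν :=
      int1.sub (i₁.const_mul _)
    have heq : (∫ y, (g₁ x - g₁ y) * (g₂ x - g₂ y) ∂ν)
        = m * (g₁ x * g₂ x) - g₁ x * I₂ - I₁ * g₂ x + I₁₂ := by
      have hfun : (fun y => (g₁ x - g₁ y) * (g₂ x - g₂ y))
          = fun y => g₁ x * g₂ x - g₁ x * g₂ y - g₂ x * g₁ y + g₁ y * g₂ y := by
        funext y; ring
      rw [hfun, integral_add int2 i₁₂, integral_sub int1 (i₁.const_mul _),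
        integral_sub (integrable_const _) (i₂.const_mul _),
        integral_const, integral_const_mul, integral_const_mul]
      simp only [smul_eq_mul, measureReal_def, ← hm, ← hI₁, ← hI₂, ← hI₁₂]
      try ring
    linarith [heq ▸ h0]
  have h0 : 0 ≤ ∫ x, (m * (g₁ x * g₂ x) - g₁ x * I₂ - I₁ * g₂ x + I₁₂) ∂ν :=
    integral_nonneg key
  have int1 : Integrable (fun x => m * (g₁ x * g₂ x) - g₁ x * I₂) ν :=
    (i₁₂.const_mul m).sub (i₁.mul_const I₂)
  have int2 : Integrable (fun x => m * (g₁ x * g₂ x) - g₁ x * I₂ - I₁ * g₂ x) ν :=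
    int1.sub (i₂.const_mul I₁)
  have heq : (∫ x, (m * (g₁ x * g₂ x) - g₁ x * I₂ - I₁ * g₂ x + I₁₂) ∂ν)
      = m * I₁₂ - I₁ * I₂ - I₁ * I₂ + m * I₁₂ := by
    rw [integral_add int2 (integrable_const _), integral_sub int1 (i₂.const_mul I₁),
      integral_sub (i₁₂.const_mul m) (i₁.mul_const I₂),
      integral_const, integral_const_mul, integral_const_mul, integral_mul_const]
    simp only [smul_eq_mul, measureReal_def, ← hm, ← hI₁, ← hI₂, ← hI₁₂]
    try ring
  rw [heq] at h0
  linarith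

lemma mono_abs_bound {g : ℝ → ℝ} (hg : Monotone g) {a b x : ℝ} (hx : x ∈ Set.Ioc a b) :
    |g x| ≤ max |g a| |g b| := by
  rcases hx with ⟨h1, h2⟩
  rw [abs_le]
  constructor
  · have : -|g a| ≤ g a := neg_abs_le _
    have h' : g a ≤ g x := hg h1.le
    have : -(max |g a| |g b|) ≤ -|g a| := neg_le_neg (le_max_left _ _)
    linarith [neg_abs_le (g a)]
  · exact le_trans (hg h2) (le_trans (le_abs_self _) (le_max_right _ _))

lemma mono_mul_integrableOn {g₁ g₂ : ℝ → ℝ} (h₁ : Monotone g₁) (h₂ : Monotone g₂) (a b : ℝ) :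
    IntegrableOn (fun x => g₁ x * g₂ x) (Set.Ioc a b) volume := by
  refine Measure.integrableOn_of_bounded (M := max |g₁ a| |g₁ b| * max |g₂ a| |g₂ b|) ?_ ?_ ?_
  · rw [Real.volume_Ioc]; exact ENNReal.ofReal_ne_top
  · exact (h₁.measurable.mul h₂.measurable).aestronglyMeasurable
  · rw [ae_restrict_iff' measurableSet_Ioc]
    refine Filter.Eventually.of_forall fun x hx => ?_
    have b₁ := mono_abs_bound h₁ hx
    have b₂ := mono_abs_bound h₂ hx
    have ha₁ : (0:ℝ) ≤ |g₁ x| := abs_nonneg _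
    have ha₂ : (0:ℝ) ≤ |g₂ x| := abs_nonneg _
    calc ‖g₁ x * g₂ x‖ = |g₁ x| * |g₂ x| := by rw [Real.norm_eq_abs, abs_mul]
      _ ≤ max |g₁ a| |g₁ b| * max |g₂ a| |g₂ b| :=
        mul_le_mul b₁ b₂ ha₂ (le_trans ha₁ b₁)

lemma mono_mul_intervalIntegrable {g₁ g₂ : ℝ → ℝ} (h₁ : Monotone g₁) (h₂ : Monotone g₂)
    (a b : ℝ) : IntervalIntegrable (fun x => g₁ x * g₂ x) volume a b :=
  ⟨mono_mul_integrableOn h₁ h₂ a b, mono_mul_integrableOn h₁ h₂ b a⟩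

/-- Chebyshev's integral inequality on an interval. -/
lemma chebyshev_interval {g₁ g₂ : ℝ → ℝ} (h₁ : Monotone g₁) (h₂ : Monotone g₂)
    {a b : ℝ} (hab : a ≤ b) :
    (∫ x in a..b, g₁ x) * (∫ x in a..b, g₂ x) ≤ (b - a) * ∫ x in a..b, g₁ x * g₂ x := by
  haveI : IsFiniteMeasure (volume.restrict (Set.Ioc a b)) := by
    constructor
    rw [Measure.restrict_apply_univ, Real.volume_Ioc]
    exact ENNReal.ofReal_lt_top
  have hmass : ((volume.restrict (Set.Ioc a b)) Set.univ).toReal = b - a := by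
    rw [Measure.restrict_apply_univ, Real.volume_Ioc, ENNReal.toReal_ofReal (by linarith)]
  have := chebyshev_measure (volume.restrict (Set.Ioc a b)) h₁ h₂
    (h₁.intervalIntegrable (a := a) (b := b)).1 (h₂.intervalIntegrable (a := a) (b := b)).1
    (mono_mul_integrableOn h₁ h₂ a b)
  rw [hmass] at this
  rw [intervalIntegral.integral_of_le hab, intervalIntegral.integral_of_le hab,
    intervalIntegral.integral_of_le hab]
  exact this

/-- Signed version of Chebyshev's integral inequality. -/
lemma chebyshev_signed {g₁ g₂ : ℝ → ℝ} (h₁ : Monotone g₁) (h₂ : Monotone g₂) (c u : ℝ) :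
    (∫ x in c..u, g₁ x) * (∫ x in c..u, g₂ x) ≤ (u - c) * ∫ x in c..u, g₁ x * g₂ x := by
  rcases le_total c u with h | h
  · exact chebyshev_interval h₁ h₂ h
  · have hk := chebyshev_interval h₁ h₂ h
    have e₁ : (∫ x in c..u, g₁ x) = -(∫ x in u..c, g₁ x) :=
      intervalIntegral.integral_symm u c
    have e₂ : (∫ x in c..u, g₂ x) = -(∫ x in u..c, g₂ x) :=
      intervalIntegral.integral_symm u c
    have e₃ : (∫ x in c..u, g₁ x * g₂ x) = -(∫ x in u..c, g₁ x * g₂ x) :=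
      intervalIntegral.integral_symm u c
    rw [e₁, e₂, e₃]
    nlinarith [hk]

lemma deriv_monotone_of_convex {h : ℝ → ℝ} (hc : ConvexOn ℝ Set.univ h)
    (hd : Differentiable ℝ h) : Monotone (deriv h) := by
  exact monotoneOn_univ.mp (hc.monotoneOn_deriv (fun x _ => hd x))

lemma ftc_convex {h : ℝ → ℝ} (hd : Differentiable ℝ h) (hm : Monotone (deriv h)) (a b : ℝ) :
    (∫ x in a..b, deriv h x) = h b - h a :=
  intervalIntegral.integral_deriv_eq_sub (fun x _ => hd x) hm.intervalIntegrable

/-- Supporting line inequality for a differentiable function with monotone derivative. -/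
lemma support_line {h : ℝ → ℝ} (hd : Differentiable ℝ h) (hm : Monotone (deriv h)) (c u : ℝ) :
    deriv h c * (u - c) ≤ h u - h c := by
  rcases le_total c u with hcu | huc
  · have hle : (∫ x in c..u, deriv h c) ≤ ∫ x in c..u, deriv h x := by
      refine intervalIntegral.integral_mono_on hcu (intervalIntegrable_const)
        hm.intervalIntegrable fun x hx => hm hx.1
    rw [intervalIntegral.integral_const, smul_eq_mul, ftc_convex hd hm] at hle
    linarith [hle]
  · have hle : (∫ x in u..c, deriv h x) ≤ ∫ x in u..c, deriv h c := by
      refine intervalIntegral.integral_mono_on huc hm.intervalIntegrable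
        (intervalIntegrable_const) fun x hx => hm hx.2
    rw [intervalIntegral.integral_const, smul_eq_mul, ftc_convex hd hm] at hle
    nlinarith [hle]

end Aux

/-- For convex differentiable `f, η` and a compactly supported probability
measure `μ`, the bilinear form `B(f,η)` satisfies
`B(f,η) ≥ ⟨η(u) - η(⟨u⟩)⟩ ⟨f(u) - f(⟨u⟩)⟩ ≥ 0`. -/
theorem bilinear_form_nonneg
    (μ : Measure ℝ) [IsProbabilityMeasure μ]
    (hKc : ∃ K : Set ℝ, IsCompact K ∧ μ Kᶜ = 0)
    (f η : ℝ → ℝ)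
    (hf : ConvexOn ℝ Set.univ f) (hη : ConvexOn ℝ Set.univ η)
    (hfd : Differentiable ℝ f) (hηd : Differentiable ℝ η)
    (q : ℝ → ℝ) (hq : ∀ u : ℝ, q u = ∫ ξ in (0:ℝ)..u, deriv η ξ * deriv f ξ) :
    (∫ u, u * q u ∂μ) - (∫ u, u ∂μ) * (∫ u, q u ∂μ)
        - (∫ u, η u * f u ∂μ) + (∫ u, η u ∂μ) * (∫ u, f u ∂μ)
      ≥ (∫ u, (η u - η (∫ x, x ∂μ)) ∂μ) * (∫ u, (f u - f (∫ x, x ∂μ)) ∂μ) ∧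
    (∫ u, (η u - η (∫ x, x ∂μ)) ∂μ) * (∫ u, (f u - f (∫ x, x ∂μ)) ∂μ) ≥ 0 := by
  obtain ⟨K, hK, hKc⟩ := hKc
  -- monotone derivatives
  have hg₁ : Monotone (deriv η) := deriv_monotone_of_convex hη hηd
  have hg₂ : Monotone (deriv f) := deriv_monotone_of_convex hf hfd
  -- continuity of q
  have hqc : Continuous q := by
    have : q = fun u => ∫ ξ in (0:ℝ)..u, deriv η ξ * deriv f ξ := funext hq
    rw [this]
    exact intervalIntegral.continuous_primitive
      (fun a b => mono_mul_intervalIntegrable hg₁ hg₂ a b) 0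
  -- integrability facts
  have Iid : Integrable (fun u : ℝ => u) μ :=
    integrable_of_compact_carrier hK hKc continuous_id
  have Iq : Integrable q μ := integrable_of_compact_carrier hK hKc hqc
  have Iuq : Integrable (fun u => u * q u) μ :=
    integrable_of_compact_carrier hK hKc (continuous_id.mul hqc)
  have Iη : Integrable η μ := integrable_of_compact_carrier hK hKc hηd.continuous
  have If : Integrable f μ := integrable_of_compact_carrier hK hKc hfd.continuous
  have Iηf : Integrable (fun u => η u * f u) μ :=
    integrable_of_compact_carrier hK hKc (hηd.continuous.mul hfd.continuous)
  set ubar : ℝ := (∫ x, x ∂μ) with hubar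
  -- second part: Jensen-type inequalities
  have jensen : ∀ (h : ℝ → ℝ), Differentiable ℝ h → Monotone (deriv h) → Integrable h μ →
      0 ≤ ∫ u, (h u - h ubar) ∂μ := by
    intro h hd hm Ih
    have hpt : ∀ u, deriv h ubar * (u - ubar) ≤ h u - h ubar := fun u => support_line hd hm ubar u
    have hInt1 : Integrable (fun u => deriv h ubar * (u - ubar)) μ :=
      (Iid.sub (integrable_const ubar)).const_mul _
    have hInt2 : Integrable (fun u => h u - h ubar) μ := Ih.sub (integrable_const _)
    have hmono := integral_mono hInt1 hInt2 hpt
    have hzero : (∫ u, deriv h ubar * (u - ubar) ∂μ) = 0 := by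
      rw [integral_const_mul, integral_sub Iid (integrable_const _), integral_const]
      simp [← hubar]
    linarith [hmono, hzero]
  have jη : 0 ≤ ∫ u, (η u - η ubar) ∂μ := jensen η hηd hg₁ Iη
  have jf : 0 ≤ ∫ u, (f u - f ubar) ∂μ := jensen f hfd hg₂ If
  have part2 : (∫ u, (η u - η ubar) ∂μ) * (∫ u, (f u - f ubar) ∂μ) ≥ 0 := mul_nonneg jη jf
  -- pointwise key inequality
  have hGpt : ∀ u, 0 ≤ (u - ubar) * (q u - q ubar) - (η u - η ubar) * (f u - f ubar) := by
    intro u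
    have e₁ : η u - η ubar = ∫ x in ubar..u, deriv η x := (ftc_convex hηd hg₁ ubar u).symm
    have e₂ : f u - f ubar = ∫ x in ubar..u, deriv f x := (ftc_convex hfd hg₂ ubar u).symm
    have e₃ : q u - q ubar = ∫ x in ubar..u, deriv η x * deriv f x := by
      rw [hq u, hq ubar]
      exact intervalIntegral.integral_interval_sub_left
        (mono_mul_intervalIntegrable hg₁ hg₂ 0 u) (mono_mul_intervalIntegrable hg₁ hg₂ 0 ubar)
    rw [e₁, e₂, e₃, sub_nonneg]
    exact chebyshev_signed hg₁ hg₂ ubar u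
  -- integrate the pointwise inequality
  have hGint : 0 ≤ ∫ u, ((u - ubar) * (q u - q ubar) - (η u - η ubar) * (f u - f ubar)) ∂μ :=
    integral_nonneg hGpt
  -- expand the integral
  have hA : (∫ u, (u - ubar) * (q u - q ubar) ∂μ)
      = (∫ u, u * q u ∂μ) - q ubar * ubar - ubar * (∫ u, q u ∂μ) + ubar * q ubar := by
    have hfun : (fun u => (u - ubar) * (q u - q ubar))
        = fun u => ((u * q u - q ubar * u) - ubar * q u) + ubar * q ubar := by funext u; ring
    have int1 : Integrable (fun u => u * q u - q ubar * u) μ := Iuq.sub (Iid.const_mul _)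
    have int2 : Integrable (fun u => u * q u - q ubar * u - ubar * q u) μ :=
      int1.sub (Iq.const_mul _)
    rw [hfun, integral_add int2 (integrable_const _), integral_sub int1 (Iq.const_mul _),
      integral_sub Iuq (Iid.const_mul _), integral_const, integral_const_mul, integral_const_mul]
    simp [← hubar]
  have hB : (∫ u, (η u - η ubar) * (f u - f ubar) ∂μ)
      = (∫ u, η u * f u ∂μ) - f ubar * (∫ u, η u ∂μ) - η ubar * (∫ u, f u ∂μ) + η ubar * f ubar := by
    have hfun : (fun u => (η u - η ubar) * (f u - f ubar))
        = fun u => ((η u * f u - f ubar * η u) - η ubar * f u) + η ubar * f ubar := by funext u; ring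
    have int1 : Integrable (fun u => η u * f u - f ubar * η u) μ := Iηf.sub (Iη.const_mul _)
    have int2 : Integrable (fun u => η u * f u - f ubar * η u - η ubar * f u) μ :=
      int1.sub (If.const_mul _)
    rw [hfun, integral_add int2 (integrable_const _), integral_sub int1 (If.const_mul _),
      integral_sub Iηf (Iη.const_mul _), integral_const, integral_const_mul, integral_const_mul]
    simp
  have hC : (∫ u, (η u - η ubar) ∂μ) = (∫ u, η u ∂μ) - η ubar := by
    rw [integral_sub Iη (integrable_const _), integral_const]
    simp
  have hD : (∫ u, (f u - f ubar) ∂μ) = (∫ u, f u ∂μ) - f ubar := by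
    rw [integral_sub If (integrable_const _), integral_const]
    simp
  have hsplit : (∫ u, ((u - ubar) * (q u - q ubar) - (η u - η ubar) * (f u - f ubar)) ∂μ)
      = (∫ u, (u - ubar) * (q u - q ubar) ∂μ) - ∫ u, (η u - η ubar) * (f u - f ubar) ∂μ := by
    refine integral_sub ?_ ?_
    · exact integrable_of_compact_carrier hK hKc
        ((continuous_id.sub continuous_const).mul (hqc.sub continuous_const))
    · exact integrable_of_compact_carrier hK hKc
        ((hηd.continuous.sub continuous_const).mul (hfd.continuous.sub continuous_const))
  rw [hsplit, hA, hB] at hGint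
  constructor
  · rw [hC, hD]
    nlinarith [hGint]
  · exact part2
end

section
/- Let μ be a compactly supported probability measure on ℝ, ⟨h⟩ = ∫ h dμ, and f, η ∈ C²(ℝ) uniformly convex with c₁ = inf f'' > 0 and c₂ = inf η'' > 0. Then the bilinear form B(f,η) = ⟨uq(u)⟩ - ⟨u⟩⟨q(u)⟩ - ⟨η(u)f(u)⟩ + ⟨η(u)⟩⟨f(u)⟩, where q(u) = ∫₀ᵘ η'f' dξ, satisfies B(f,η) ≥ (c₁c₂/4)·⟨|u - ⟨u⟩|²⟩² ≥ (c₁c₂/4)·⟨|u - ⟨u⟩|⟩⁴. -/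
open MeasureTheory

section Aux

/-- A function vanishing at `v` with nonpositive derivative before `v` and nonnegative
derivative after `v` is nonnegative. -/
lemma aux_nonneg_of_deriv_sign {g : ℝ → ℝ} (hg : Differentiable ℝ g) (v : ℝ)
    (h0 : g v = 0) (hneg : ∀ u ≤ v, deriv g u ≤ 0) (hpos : ∀ u, v ≤ u → 0 ≤ deriv g u) :
    ∀ u, 0 ≤ g u := by
  intro u
  rcases le_total u v with h | h
  · have hanti : AntitoneOn g (Set.Iic v) :=
      antitoneOn_of_deriv_nonpos (convex_Iic v) hg.continuous.continuousOn
        hg.differentiableOn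
        (fun x hx => hneg x (le_of_lt (by simpa using hx)))
    have := hanti (Set.mem_Iic.2 h) (Set.mem_Iic.2 le_rfl) h
    linarith [h0 ▸ this]
  · have hmono : MonotoneOn g (Set.Ici v) :=
      monotoneOn_of_deriv_nonneg (convex_Ici v) hg.continuous.continuousOn
        hg.differentiableOn
        (fun x hx => hpos x (le_of_lt (by simpa using hx)))
    have := hmono (Set.mem_Ici.2 le_rfl) (Set.mem_Ici.2 h) h
    linarith [h0 ▸ this]

lemma aux_integrable {μ : Measure ℝ} [IsFiniteMeasure μ]
    (hKc : ∃ K : Set ℝ, IsCompact K ∧ μ Kᶜ = 0) {g : ℝ → ℝ} (hg : Continuous g) :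
    Integrable g μ := by
  obtain ⟨K, hK, hμK⟩ := hKc
  obtain ⟨C, hC⟩ := hK.exists_bound_of_continuousOn hg.continuousOn
  refine Integrable.mono' (integrable_const C) hg.aestronglyMeasurable ?_
  have hae : ∀ᵐ x ∂μ, x ∈ K := by
    rw [MeasureTheory.ae_iff]
    exact hμK
  filter_upwards [hae] with x hx using hC x hx

end Aux

theorem test (f : ℝ → ℝ) (hf2 : ContDiff ℝ 2 f) : Differentiable ℝ f ∧ Differentiable ℝ (deriv f) ∧ Continuous (deriv (deriv f)) := by
  have h2 : ContDiff ℝ (1+1 : ℕ) f := by exact_mod_cast hf2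
  have h1 : ContDiff ℝ 1 (deriv f) := ((contDiff_succ_iff_deriv).mp h2).2.2
  exact ⟨h2.differentiable (by norm_num), h1.differentiable one_ne_zero,
    (contDiff_one_iff_deriv.mp h1).2⟩

lemma aux_facts {f : ℝ → ℝ} (hf2 : ContDiff ℝ 2 f) :
    Differentiable ℝ f ∧ Differentiable ℝ (deriv f) ∧ Continuous (deriv f) := by
  have h2 : ContDiff ℝ (1+1 : ℕ) f := by exact_mod_cast hf2
  have h1 : ContDiff ℝ 1 (deriv f) := ((contDiff_succ_iff_deriv).mp h2).2.2
  exact ⟨h2.differentiable (by norm_num), h1.differentiable one_ne_zero, h1.continuous⟩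

/-- Strong convexity lower bound. -/
lemma aux_strong_convex {f : ℝ → ℝ} (hf2 : ContDiff ℝ 2 f) {c : ℝ}
    (hc : ∀ u, c ≤ deriv (deriv f) u) (m u : ℝ) :
    c / 2 * (u - m) ^ 2 ≤ f u - f m - deriv f m * (u - m) := by
  obtain ⟨hfd, hf'd, hf'c⟩ := aux_facts hf2
  -- the auxiliary function
  set g : ℝ → ℝ := fun u => f u - f m - deriv f m * (u - m) - c / 2 * (u - m) ^ 2 with hg
  have hgd : Differentiable ℝ g := by
    apply Differentiable.sub
    apply Differentiable.sub
    apply Differentiable.sub hfd (differentiable_const _)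
    · exact (differentiable_const _).mul (differentiable_id.sub (differentiable_const _))
    · exact (differentiable_const _).mul ((differentiable_id.sub (differentiable_const _)).pow 2)
  have hderiv : ∀ u, deriv g u = deriv f u - deriv f m - c * (u - m) := by
    intro u
    have h1 := (((hfd u).hasDerivAt.sub (hasDerivAt_const u (f m))).sub
        (((hasDerivAt_id u).sub (hasDerivAt_const u m)).const_mul (deriv f m))).sub
        ((((hasDerivAt_id u).sub (hasDerivAt_const u m)).pow 2).const_mul (c/2))
    have h2 : HasDerivAt g (deriv f u - (deriv f m * (1 - 0)) -
        c / 2 * (↑2 * (id u - m) ^ (2 - 1) * (1 - 0))) u := by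
      exact h1.congr_deriv (by simp)
    rw [h2.deriv]; push_cast; simp only [id]; ring
  -- deriv f u - c * u is monotone
  have hmono : Monotone (fun u => deriv f u - c * u) := by
    apply monotone_of_deriv_nonneg
    · exact hf'd.sub ((differentiable_const _).mul differentiable_id)
    · intro x
      have h1 : HasDerivAt (fun u => deriv f u - c * u) (deriv (deriv f) x - c * 1) x :=
        (hf'd x).hasDerivAt.sub ((hasDerivAt_id x).const_mul c)
      rw [h1.deriv]
      have := hc x; linarith
  have key : ∀ u, 0 ≤ g u := by
    apply aux_nonneg_of_deriv_sign hgd m (by simp [hg])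
    · intro u hu
      rw [hderiv]
      have := hmono (le_of_eq rfl : u ≤ u)
      have h2 := hmono hu
      simp only at h2; nlinarith
    · intro u hu
      rw [hderiv]
      have h2 := hmono hu
      simp only at h2; nlinarith
  have := key u
  simp only [hg] at this; linarith

/-- Key pointwise inequality: `(u-v)(q(u)-q(v)) - (η(u)-η(v))(f(u)-f(v)) ≥ 0`. -/
lemma aux_key_pointwise {f η : ℝ → ℝ} (hf2 : ContDiff ℝ 2 f) (hη2 : ContDiff ℝ 2 η)
    (hf'mono : Monotone (deriv f)) (hη'mono : Monotone (deriv η))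
    (q : ℝ → ℝ) (hq : ∀ u, q u = ∫ ξ in (0:ℝ)..u, deriv η ξ * deriv f ξ) (v u : ℝ) :
    0 ≤ (u - v) * (q u - q v) - (η u - η v) * (f u - f v) := by
  obtain ⟨hfd, hf'd, hf'c⟩ := aux_facts hf2
  obtain ⟨hηd, hη'd, hη'c⟩ := aux_facts hη2
  have hcont : Continuous (fun ξ => deriv η ξ * deriv f ξ) := hη'c.mul hf'c
  have hqd : ∀ u : ℝ, HasDerivAt q (deriv η u * deriv f u) u := by
    intro u
    have h1 : HasDerivAt (fun w => ∫ ξ in (0:ℝ)..w, deriv η ξ * deriv f ξ)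
        (deriv η u * deriv f u) u :=
      intervalIntegral.integral_hasDerivAt_right (hcont.intervalIntegrable _ _)
        (hcont.stronglyMeasurableAtFilter MeasureTheory.volume (nhds u)) hcont.continuousAt
    have h2 : q = fun w => ∫ ξ in (0:ℝ)..w, deriv η ξ * deriv f ξ := funext hq
    rw [h2]; exact h1
  set g : ℝ → ℝ := fun u => (u - v) * (q u - q v) - (η u - η v) * (f u - f v) with hgdef
  have hgd : ∀ u : ℝ, HasDerivAt g
      ((q u - q v) + (u - v) * (deriv η u * deriv f u)
        - (deriv η u * (f u - f v) + (η u - η v) * deriv f u)) u := by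
    intro u
    have h := (((hasDerivAt_id u).sub (hasDerivAt_const u v)).mul
        ((hqd u).sub (hasDerivAt_const u (q v)))).sub
      (((hηd u).hasDerivAt.sub (hasDerivAt_const u (η v))).mul
        ((hfd u).hasDerivAt.sub (hasDerivAt_const u (f v))))
    exact h.congr_deriv (by simp only [Pi.sub_apply, id]; ring)
  -- integral representation of the derivative
  have hrep : ∀ u : ℝ, deriv g u
      = ∫ ξ in v..u, (deriv η u - deriv η ξ) * (deriv f u - deriv f ξ) := by
    intro u
    rw [(hgd u).deriv]
    have e1 : ∫ ξ in v..u, deriv η ξ * deriv f ξ = q u - q v := by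
      have h := intervalIntegral.integral_add_adjacent_intervals
        (μ := MeasureTheory.volume) (a := (0:ℝ)) (b := v) (c := u)
        (hcont.intervalIntegrable _ _) (hcont.intervalIntegrable _ _)
      rw [hq u, hq v]; linarith [h]
    have e2 : ∫ ξ in v..u, deriv f ξ = f u - f v :=
      intervalIntegral.integral_deriv_eq_sub (fun x _ => hfd x) (hf'c.intervalIntegrable _ _)
    have e3 : ∫ ξ in v..u, deriv η ξ = η u - η v :=
      intervalIntegral.integral_deriv_eq_sub (fun x _ => hηd x) (hη'c.intervalIntegrable _ _)
    have i1 : IntervalIntegrable (fun _ : ℝ => deriv η u * deriv f u) MeasureTheory.volume v u :=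
      intervalIntegrable_const
    have i2 : IntervalIntegrable (fun ξ : ℝ => deriv η u * deriv f ξ) MeasureTheory.volume v u :=
      (continuous_const.mul hf'c).intervalIntegrable _ _
    have i3 : IntervalIntegrable (fun ξ : ℝ => deriv f u * deriv η ξ) MeasureTheory.volume v u :=
      (continuous_const.mul hη'c).intervalIntegrable _ _
    have i4 : IntervalIntegrable (fun ξ : ℝ => deriv η ξ * deriv f ξ) MeasureTheory.volume v u :=
      hcont.intervalIntegrable _ _
    have h1 : (fun ξ : ℝ => (deriv η u - deriv η ξ) * (deriv f u - deriv f ξ))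
        = fun ξ : ℝ => ((fun _ => deriv η u * deriv f u) ξ - deriv η u * deriv f ξ)
            - deriv f u * deriv η ξ + deriv η ξ * deriv f ξ := by
      funext ξ; ring
    rw [h1, intervalIntegral.integral_add ((i1.sub i2).sub i3) i4,
      intervalIntegral.integral_sub (i1.sub i2) i3,
      intervalIntegral.integral_sub i1 i2,
      intervalIntegral.integral_const, intervalIntegral.integral_const_mul,
      intervalIntegral.integral_const_mul, e1, e2, e3]
    simp only [smul_eq_mul]; ring
  have hnn : ∀ u ξ : ℝ, 0 ≤ (deriv η u - deriv η ξ) * (deriv f u - deriv f ξ) := by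
    intro u ξ
    rcases le_total ξ u with h | h
    · exact mul_nonneg (sub_nonneg.2 (hη'mono h)) (sub_nonneg.2 (hf'mono h))
    · exact mul_nonneg_iff.2 (Or.inr ⟨sub_nonpos.2 (hη'mono h), sub_nonpos.2 (hf'mono h)⟩)
  have hmain := aux_nonneg_of_deriv_sign (g := g) (fun u => (hgd u).differentiableAt) v
    (by simp [hgdef]) ?_ ?_ u
  · exact hmain
  · intro u hu
    rw [hrep u, intervalIntegral.integral_symm]
    have h := intervalIntegral.integral_nonneg (μ := MeasureTheory.volume) hu
      (fun ξ _ => hnn u ξ)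
    linarith
  · intro u hu
    rw [hrep u]
    exact intervalIntegral.integral_nonneg hu (fun ξ _ => hnn u ξ)

/-- For uniformly convex `C²` functions `f, η` with `f'' ≥ c₁ > 0`, `η'' ≥ c₂ > 0`,
the bilinear form satisfies `B(f,η) ≥ (c₁c₂/4)⟨|u-⟨u⟩|²⟩² ≥ (c₁c₂/4)⟨|u-⟨u⟩|⟩⁴`. -/
theorem bilinear_form_uniformly_convex
    (μ : Measure ℝ) [IsProbabilityMeasure μ]
    (hKc : ∃ K : Set ℝ, IsCompact K ∧ μ Kᶜ = 0)
    (f η : ℝ → ℝ) (hf2 : ContDiff ℝ 2 f) (hη2 : ContDiff ℝ 2 η)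
    (c₁ c₂ : ℝ) (hc₁ : 0 < c₁) (hc₂ : 0 < c₂)
    (hf'' : ∀ u : ℝ, c₁ ≤ deriv (deriv f) u)
    (hη'' : ∀ u : ℝ, c₂ ≤ deriv (deriv η) u)
    (q : ℝ → ℝ) (hq : ∀ u : ℝ, q u = ∫ ξ in (0:ℝ)..u, deriv η ξ * deriv f ξ) :
    (∫ u, u * q u ∂μ) - (∫ u, u ∂μ) * (∫ u, q u ∂μ)
        - (∫ u, η u * f u ∂μ) + (∫ u, η u ∂μ) * (∫ u, f u ∂μ)
      ≥ (c₁ * c₂ / 4) * (∫ u, |u - (∫ x, x ∂μ)| ^ 2 ∂μ) ^ 2 ∧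
    (c₁ * c₂ / 4) * (∫ u, |u - (∫ x, x ∂μ)| ^ 2 ∂μ) ^ 2
      ≥ (c₁ * c₂ / 4) * (∫ u, |u - (∫ x, x ∂μ)| ∂μ) ^ 4 := by
  obtain ⟨hfd, hf'd, hf'c⟩ := aux_facts hf2
  obtain ⟨hηd, hη'd, hη'c⟩ := aux_facts hη2
  have hf'mono : Monotone (deriv f) :=
    monotone_of_deriv_nonneg hf'd fun x => le_trans hc₁.le (hf'' x)
  have hη'mono : Monotone (deriv η) :=
    monotone_of_deriv_nonneg hη'd fun x => le_trans hc₂.le (hη'' x)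
  have hcont : Continuous (fun ξ => deriv η ξ * deriv f ξ) := hη'c.mul hf'c
  have hqc : Continuous q := by
    have h2 : q = fun w => ∫ ξ in (0:ℝ)..w, deriv η ξ * deriv f ξ := funext hq
    rw [h2]
    exact intervalIntegral.continuous_primitive (fun a b => hcont.intervalIntegrable a b) 0
  have hint : ∀ {g : ℝ → ℝ}, Continuous g → Integrable g μ := fun hg => aux_integrable hKc hg
  set m := ∫ x, x ∂μ with hm
  set V := ∫ u, |u - m| ^ 2 ∂μ with hV
  have I1 : Integrable (fun u => u * q u) μ := hint (continuous_id.mul hqc)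
  have I2 : Integrable q μ := hint hqc
  have I3 : Integrable f μ := hint hfd.continuous
  have I4 : Integrable η μ := hint hηd.continuous
  have I5 : Integrable (fun u => η u * f u) μ := hint (hηd.continuous.mul hfd.continuous)
  have I6 : Integrable (fun u : ℝ => u) μ := hint continuous_id
  have Iabs : Integrable (fun u : ℝ => |u - m|) μ :=
    hint ((continuous_id.sub continuous_const).abs)
  have Iabs2 : Integrable (fun u : ℝ => |u - m| ^ 2) μ :=
    hint (((continuous_id.sub continuous_const).abs).pow 2)
  have e0 : ∫ u, (u : ℝ) ∂μ = m := rfl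
  have eum : ∫ u, (u - m) ∂μ = 0 := by
    rw [integral_sub I6 (integrable_const m), e0, integral_const]
    simp
  have hV0 : 0 ≤ V := integral_nonneg fun u => by positivity
  -- strong convexity integrated: ⟨f⟩ - f m ≥ c₁/2 V and similarly for η
  have hconv : ∀ (g : ℝ → ℝ) (hg2 : ContDiff ℝ 2 g) (c : ℝ) (hc : ∀ u, c ≤ deriv (deriv g) u),
      c / 2 * V ≤ (∫ u, g u ∂μ) - g m := by
    intro g hg2 c hc
    obtain ⟨hgd, hg'd, hg'c⟩ := aux_facts hg2
    have hpt : ∀ u, c / 2 * |u - m| ^ 2 ≤ g u - (g m + deriv g m * (u - m)) := by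
      intro u
      rw [sq_abs]
      have := aux_strong_convex hg2 hc m u
      linarith
    have K0 : Integrable (fun u : ℝ => u - m) μ := I6.sub (integrable_const m)
    have K1 : Integrable (fun u : ℝ => deriv g m * (u - m)) μ := K0.const_mul _
    have K2 : Integrable (fun u : ℝ => g m + deriv g m * (u - m)) μ :=
      (integrable_const _).add K1
    have hle : ∫ u, c / 2 * |u - m| ^ 2 ∂μ ≤ ∫ u, (g u - (g m + deriv g m * (u - m))) ∂μ := by
      refine integral_mono (Iabs2.const_mul _) ?_ hpt
      exact (hint hgd.continuous).sub K2
    rw [integral_const_mul] at hle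
    rw [integral_sub (hint hgd.continuous) K2,
      integral_add (integrable_const _) K1,
      integral_const_mul, eum, integral_const] at hle
    simp only [measure_univ, probReal_univ, ENNReal.toReal_one, smul_eq_mul, one_mul, mul_zero, add_zero] at hle
    exact hle
  have hfconv := hconv f hf2 c₁ hf''
  have hηconv := hconv η hη2 c₂ hη''
  -- the ∫ P term
  have hPnn : 0 ≤ ∫ u, ((u - m) * (q u - q m) - (η u - η m) * (f u - f m)) ∂μ :=
    integral_nonneg fun u => aux_key_pointwise hf2 hη2 hf'mono hη'mono q hq m u
  -- expand ∫ P
  have J1 : Integrable (fun u : ℝ => f m * η u) μ := I4.const_mul _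
  have J2 : Integrable (fun u : ℝ => η m * f u) μ := I3.const_mul _
  have J3 : Integrable (fun _ : ℝ => m * q m - η m * f m) μ := integrable_const _
  have J4 : Integrable (fun u : ℝ => q m * u) μ := I6.const_mul _
  have J5 : Integrable (fun u : ℝ => m * q u) μ := I2.const_mul _
  have hPexp : ∫ u, ((u - m) * (q u - q m) - (η u - η m) * (f u - f m)) ∂μ
      = (∫ u, u * q u ∂μ) - q m * m - m * (∫ u, q u ∂μ) + m * q m
        - (∫ u, η u * f u ∂μ) + f m * (∫ u, η u ∂μ) + η m * (∫ u, f u ∂μ) - η m * f m := by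
    have hfun : (fun u => (u - m) * (q u - q m) - (η u - η m) * (f u - f m))
        = fun u => (u * q u + (f m * η u + (η m * f u + (m * q m - η m * f m))))
            - (q m * u + (m * q u + η u * f u)) := by
      funext u; ring
    have L1 : Integrable (fun u : ℝ => η m * f u + (m * q m - η m * f m)) μ :=
      J2.add J3
    have L2 : Integrable (fun u : ℝ => f m * η u + (η m * f u + (m * q m - η m * f m))) μ :=
      J1.add L1
    have L3 : Integrable
        (fun u : ℝ => u * q u + (f m * η u + (η m * f u + (m * q m - η m * f m)))) μ :=
      I1.add L2
    have L4 : Integrable (fun u : ℝ => m * q u + η u * f u) μ := J5.add I5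
    have L5 : Integrable (fun u : ℝ => q m * u + (m * q u + η u * f u)) μ := J4.add L4
    rw [hfun, integral_sub L3 L5,
      integral_add I1 L2, integral_add J1 L1, integral_add J2 J3,
      integral_add J4 L4, integral_add J5 I5,
      integral_const_mul, integral_const_mul, integral_const_mul, integral_const_mul,
      integral_const, e0]
    simp only [measure_univ, probReal_univ, ENNReal.toReal_one, one_smul]
    ring
  constructor
  · -- first inequality
    have hprod : (c₂ / 2 * V) * (c₁ / 2 * V) ≤ ((∫ u, η u ∂μ) - η m) * ((∫ u, f u ∂μ) - f m) :=
      mul_le_mul hηconv hfconv (by positivity) (le_trans (by positivity) hηconv)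
    rw [ge_iff_le]
    nlinarith [hPnn, hPexp, hprod]
  · -- second inequality
    set a := ∫ u, |u - m| ∂μ with ha
    have ha0 : 0 ≤ a := integral_nonneg fun u => abs_nonneg _
    have hvar : a ^ 2 ≤ V := by
      have h0 : 0 ≤ ∫ u, (|u - m| - a) ^ 2 ∂μ := integral_nonneg fun u => sq_nonneg _
      have hfun : (fun u : ℝ => (|u - m| - a) ^ 2)
          = fun u => (|u - m| ^ 2 + a ^ 2) - 2 * a * |u - m| := by
        funext u; ring
      have M1 : Integrable (fun u : ℝ => |u - m| ^ 2 + a ^ 2) μ :=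
        Iabs2.add (integrable_const _)
      have M2 : Integrable (fun u : ℝ => 2 * a * |u - m|) μ := Iabs.const_mul _
      rw [hfun, integral_sub M1 M2,
        integral_add Iabs2 (integrable_const _), integral_const_mul, integral_const] at h0
      simp only [measure_univ, probReal_univ, ENNReal.toReal_one, one_smul] at h0
      nlinarith [h0]
    have h4 : a ^ 4 ≤ V ^ 2 := by nlinarith [sq_nonneg a, hvar, hV0]
    have hc : 0 ≤ c₁ * c₂ / 4 := by positivity
    exact mul_le_mul_of_nonneg_left h4 hc
end

section
/- Suppose I : [0, δ₀] → ℝ is nonnegative, nondecreasing, differentiable, with I(0) = 0 and I(δ) > 0 for δ > 0, and there is C > 0 with I(δ) ≤ C·(I'(δ))^{3/2} for all δ ∈ (0, δ₀]. Then there is a constant c > 0 (depending only on C) such that I(δ) ≥ c·δ³ for all δ ∈ [0, δ₀]. -/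
open Set

/-- If `I ≥ 0` is nondecreasing, differentiable, vanishes at `0`, is positive on
`(0, δ₀]`, and satisfies the differential inequality `I ≤ C (I')^{3/2}`, then
`I(δ) ≥ c δ³` for some `c > 0` depending only on `C`. -/
theorem cubic_lower_bound_of_differential_inequality
    (δ₀ : ℝ) (hδ₀ : 0 < δ₀) (I : ℝ → ℝ)
    (h0 : I 0 = 0)
    (hnn : ∀ δ ∈ Icc (0:ℝ) δ₀, 0 ≤ I δ)
    (hmono : MonotoneOn I (Icc (0:ℝ) δ₀))
    (hdiff : ∀ δ ∈ Icc (0:ℝ) δ₀, DifferentiableAt ℝ I δ)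
    (hpos : ∀ δ ∈ Ioc (0:ℝ) δ₀, 0 < I δ)
    (C : ℝ) (hC : 0 < C)
    (hineq : ∀ δ ∈ Ioc (0:ℝ) δ₀, I δ ≤ C * (deriv I δ) ^ ((3:ℝ)/2)) :
    ∃ c : ℝ, 0 < c ∧ ∀ δ ∈ Icc (0:ℝ) δ₀, c * δ ^ 3 ≤ I δ := by
  have hCp : (0:ℝ) < C ^ ((2:ℝ)/3) := Real.rpow_pos_of_pos hC _
  set k : ℝ := (3 * C ^ ((2:ℝ)/3))⁻¹ with hk
  have hkpos : 0 < k := by positivity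
  -- lower bound on the derivative
  have hd : ∀ δ ∈ Ioc (0:ℝ) δ₀, (I δ / C) ^ ((2:ℝ)/3) ≤ deriv I δ := by
    intro δ hδ
    have hIpos := hpos δ hδ
    have hineqδ := hineq δ hδ
    have hdpos : 0 < deriv I δ := by
      by_contra h
      push_neg at h
      rcases lt_or_eq_of_le h with h' | h'
      · rw [Real.rpow_def_of_neg h'] at hineqδ
        have hc : Real.cos ((3:ℝ)/2 * Real.pi) = 0 := by
          have : (3:ℝ)/2 * Real.pi = Real.pi + Real.pi/2 := by ring
          rw [this, Real.cos_add, Real.cos_pi, Real.sin_pi, Real.cos_pi_div_two]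
          ring
        rw [hc] at hineqδ
        simp at hineqδ
        linarith
      · rw [h', Real.zero_rpow (by norm_num)] at hineqδ
        simp at hineqδ
        linarith
    have h1 : I δ / C ≤ (deriv I δ) ^ ((3:ℝ)/2) := by
      rw [div_le_iff₀ hC]
      linarith [hineqδ]
    have h2 : (I δ / C) ^ ((2:ℝ)/3) ≤ ((deriv I δ) ^ ((3:ℝ)/2)) ^ ((2:ℝ)/3) :=
      Real.rpow_le_rpow (by positivity) h1 (by norm_num)
    calc (I δ / C) ^ ((2:ℝ)/3) ≤ ((deriv I δ) ^ ((3:ℝ)/2)) ^ ((2:ℝ)/3) := h2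
      _ = deriv I δ := by
          rw [← Real.rpow_mul hdpos.le]
          norm_num
  -- the cube root of I
  set J : ℝ → ℝ := fun δ => I δ ^ ((1:ℝ)/3) with hJ
  have hJcont : ContinuousOn J (Icc (0:ℝ) δ₀) := by
    intro δ hδ
    exact ((Real.continuousAt_rpow_const _ _ (Or.inr (by norm_num))).comp
      ((hdiff δ hδ).continuousAt)).continuousWithinAt
  have hJderiv : ∀ δ ∈ Ioo (0:ℝ) δ₀,
      HasDerivAt J (deriv I δ * ((1:ℝ)/3) * I δ ^ ((1:ℝ)/3 - 1)) δ := by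
    intro δ hδ
    have hδ' : δ ∈ Icc (0:ℝ) δ₀ := ⟨hδ.1.le, hδ.2.le⟩
    have : HasDerivAt I (deriv I δ) δ := (hdiff δ hδ').hasDerivAt
    exact this.rpow_const (Or.inl (ne_of_gt (hpos δ ⟨hδ.1, hδ.2.le⟩)))
  have hJd_ge : ∀ δ ∈ Ioo (0:ℝ) δ₀,
      k ≤ deriv I δ * ((1:ℝ)/3) * I δ ^ ((1:ℝ)/3 - 1) := by
    intro δ hδ
    have ha : 0 < I δ := hpos δ ⟨hδ.1, hδ.2.le⟩
    have hdδ := hd δ ⟨hδ.1, hδ.2.le⟩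
    have hfac : 0 < ((1:ℝ)/3) * I δ ^ ((1:ℝ)/3 - 1) := by positivity
    have key : (I δ / C) ^ ((2:ℝ)/3) * (((1:ℝ)/3) * I δ ^ ((1:ℝ)/3 - 1)) = k := by
      rw [Real.div_rpow ha.le hC.le]
      have h1 : ((1:ℝ)/3 - 1) = -((2:ℝ)/3) := by norm_num
      rw [h1, Real.rpow_neg ha.le, hk]
      have hane : I δ ^ ((2:ℝ)/3) ≠ 0 := ne_of_gt (Real.rpow_pos_of_pos ha _)
      field_simp
    calc k = (I δ / C) ^ ((2:ℝ)/3) * (((1:ℝ)/3) * I δ ^ ((1:ℝ)/3 - 1)) := key.symm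
      _ ≤ deriv I δ * (((1:ℝ)/3) * I δ ^ ((1:ℝ)/3 - 1)) :=
          mul_le_mul_of_nonneg_right hdδ hfac.le
      _ = deriv I δ * ((1:ℝ)/3) * I δ ^ ((1:ℝ)/3 - 1) := by ring
  -- g = J - k·id is monotone on [0, δ₀]
  set g : ℝ → ℝ := fun δ => J δ - k * δ with hg
  have hgmono : MonotoneOn g (Icc (0:ℝ) δ₀) := by
    apply monotoneOn_of_deriv_nonneg (convex_Icc _ _)
    · exact hJcont.sub ((continuous_const.mul continuous_id).continuousOn)
    · rw [interior_Icc]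
      intro x hx
      exact (((hJderiv x hx).sub
        ((hasDerivAt_id x).const_mul k)).differentiableAt).differentiableWithinAt
    · rw [interior_Icc]
      intro x hx
      have hder : HasDerivAt g (deriv I x * ((1:ℝ)/3) * I x ^ ((1:ℝ)/3 - 1) - k * 1) x :=
        (hJderiv x hx).sub ((hasDerivAt_id x).const_mul k)
      rw [hder.deriv]
      have := hJd_ge x hx
      linarith
  refine ⟨k ^ 3, by positivity, ?_⟩
  intro δ hδ
  have h0mem : (0:ℝ) ∈ Icc (0:ℝ) δ₀ := ⟨le_rfl, hδ₀.le⟩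
  have hg0 : g 0 = 0 := by
    simp [hg, hJ, h0, Real.zero_rpow (by norm_num : ((1:ℝ)/3) ≠ 0)]
  have hkδ : k * δ ≤ J δ := by
    have := hgmono h0mem hδ hδ.1
    rw [hg0] at this
    simp only [hg] at this
    linarith
  have hJcube : (J δ) ^ (3:ℕ) = I δ := by
    rw [hJ]
    rw [← Real.rpow_natCast (I δ ^ ((1:ℝ)/3)) 3, ← Real.rpow_mul (hnn δ hδ)]
    norm_num
  calc k ^ 3 * δ ^ 3 = (k * δ) ^ 3 := by ring
    _ ≤ (J δ) ^ 3 := pow_le_pow_left₀ (mul_nonneg hkpos.le hδ.1) hkδ 3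
    _ = I δ := hJcube
end
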